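/- Legendre transform of the quantum Kullback–Leibler divergence in its first argument: for any μ0 ∈ S^d_{++} and any u ∈ S^d, sup over P ∈ S^d_{++} of [ tr(u P) − KL(P|μ0) ] = tr( exp(u + log μ0) − μ0 ), and the supremum is attained uniquely at P = exp(u + log μ0). -/

import Mathlib

open Matrix

/-- Matrix exponential of a real matrix. -/
noncomputable def mexp {d : ℕ} (A : Matrix (Fin d) (Fin d) ℝ) : Matrix (Fin d) (Fin d) ℝ :=
  NormedSpace.exp A

/-- Matrix logarithm of a symmetric (hermitian) real matrix, defined through the
eigendecomposition `P = U diag(σ) Uᵀ` as `log P = U diag(log σ) Uᵀ` (junk value `0`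
on non-symmetric matrices). -/
noncomputable def mlog {d : ℕ} (A : Matrix (Fin d) (Fin d) ℝ) : Matrix (Fin d) (Fin d) ℝ :=
  if h : A.IsHermitian then
    (h.eigenvectorUnitary : Matrix (Fin d) (Fin d) ℝ)
      * diagonal (fun i => Real.log (h.eigenvalues i))
      * star (h.eigenvectorUnitary : Matrix (Fin d) (Fin d) ℝ)
  else 0

/-- Quantum (von Neumann) entropy `H(P) = -tr(P log P - P)`. -/
noncomputable def qH {d : ℕ} (P : Matrix (Fin d) (Fin d) ℝ) : ℝ :=
  -(P * mlog P - P).trace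

/-- Quantum Kullback-Leibler divergence `KL(P|Q) = tr(P log P - P log Q - P + Q)`. -/
noncomputable def qKL {d : ℕ} (P Q : Matrix (Fin d) (Fin d) ℝ) : ℝ :=
  (P * mlog P - P * mlog Q - P + Q).trace

/-! With `Q = exp (u + log μ0)` we have `log Q = u + log μ0`, so for every `P`
`tr (u P) - KL(P|μ0) = tr (Q - μ0) - KL(P|Q)`. The claim is therefore Klein's inequality
`KL(P|Q) ≥ 0`, with equality only at `P = Q`. In eigenbases `(vᵢ)` of `P` and `(wⱼ)` of `Q`,
`KL(P|Q) = ∑ᵢⱼ ⟨vᵢ, wⱼ⟩² (pᵢ log pᵢ - pᵢ log qⱼ - pᵢ + qⱼ)`, and each scalar term equals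
`qⱼ klFun (pᵢ / qⱼ) ≥ 0`, vanishing only for `pᵢ = qⱼ`. So at equality `pᵢ = qⱼ` whenever
`⟨vᵢ, wⱼ⟩ ≠ 0`, which makes the two spectral decompositions agree. -/

-- The CFC lemmas on `exp` and `log` are stated for normed ordered algebras; any matrix norm will do.
open scoped Matrix.Norms.L2Operator MatrixOrder

namespace Matrix

variable {n : Type*} [Fintype n] [DecidableEq n]

lemma trace_conj_diagonal_mul_conj_diagonal (V W : Matrix n n ℝ) (a b : n → ℝ) :
    (V * diagonal a * star V * (W * diagonal b * star W)).trace
      = ∑ i, ∑ j, (star V * W) i j ^ 2 * a i * b j := by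
  set M := star V * W
  have hcycle : (V * diagonal a * star V * (W * diagonal b * star W)).trace
      = (diagonal a * M * diagonal b * star M).trace := by
    rw [show V * diagonal a * star V * (W * diagonal b * star W)
        = V * (diagonal a * star V * W * diagonal b * star W) by simp only [mul_assoc],
      trace_mul_comm, star_mul, star_star]
    simp only [M, mul_assoc]
  rw [hcycle, trace]
  refine Finset.sum_congr rfl fun i _ => ?_
  rw [diag, mul_apply]
  refine Finset.sum_congr rfl fun j _ => ?_
  rw [mul_diagonal, diagonal_mul, star_apply, star_trivial]
  ring

lemma conj_diagonal_eq_conj_diagonal {R : Type*} [CommRing R] [StarRing R] {V W : Matrix n n R}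
    (hV : V ∈ unitaryGroup n R) (hW : W ∈ unitaryGroup n R) {a b : n → R}
    (hab : ∀ i j, (star V * W) i j ≠ 0 → a i = b j) :
    V * diagonal a * star V = W * diagonal b * star W := by
  have hcomm : diagonal a * (star V * W) = star V * W * diagonal b := by
    ext i j
    rw [diagonal_mul, mul_diagonal]
    by_cases hM : (star V * W) i j = 0
    · rw [hM, mul_zero, zero_mul]
    · rw [hab i j hM, mul_comm]
  calc V * diagonal a * star V
      = V * (diagonal a * (star V * W)) * star W := by
        simp only [mul_assoc, Unitary.mul_star_self_of_mem hW, mul_one]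
    _ = V * star V * W * diagonal b * star W := by rw [hcomm]; simp only [mul_assoc]
    _ = W * diagonal b * star W := by rw [Unitary.mul_star_self_of_mem hV, one_mul]

namespace IsHermitian

variable {A B : Matrix n n ℝ}

lemma cfc_eq_conj_diagonal (hA : A.IsHermitian) (f : ℝ → ℝ) :
    cfc f A = (hA.eigenvectorUnitary : Matrix n n ℝ) * diagonal (f ∘ hA.eigenvalues)
      * star (hA.eigenvectorUnitary : Matrix n n ℝ) := by
  rw [hA.cfc_eq, IsHermitian.cfc, Unitary.conjStarAlgAut_apply]
  rfl

lemma eq_conj_diagonal (hA : A.IsHermitian) :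
    A = (hA.eigenvectorUnitary : Matrix n n ℝ) * diagonal hA.eigenvalues
      * star (hA.eigenvectorUnitary : Matrix n n ℝ) := by
  conv_lhs => rw [← cfc_id ℝ A hA.isSelfAdjoint, hA.cfc_eq_conj_diagonal]
  rfl

lemma trace_cfc_mul_cfc (hA : A.IsHermitian) (hB : B.IsHermitian) (f g : ℝ → ℝ) :
    (cfc f A * cfc g B).trace
      = ∑ i, ∑ j, (star (hA.eigenvectorUnitary : Matrix n n ℝ) * hB.eigenvectorUnitary) i j ^ 2
          * f (hA.eigenvalues i) * g (hB.eigenvalues j) := by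
  rw [hA.cfc_eq_conj_diagonal, hB.cfc_eq_conj_diagonal, trace_conj_diagonal_mul_conj_diagonal]
  rfl

end IsHermitian

end Matrix

namespace Real

lemma mul_log_sub_mul_log_sub_add_eq_mul_klFun {p q : ℝ} (hp : p ≠ 0) (hq : q ≠ 0) :
    p * log p - p * log q - p + q = q * InformationTheory.klFun (p / q) := by
  rw [InformationTheory.klFun_apply, log_div hp hq]
  field_simp
  ring

lemma mul_log_sub_mul_log_sub_add_nonneg {p q : ℝ} (hp : 0 < p) (hq : 0 < q) :
    0 ≤ p * log p - p * log q - p + q := by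
  rw [mul_log_sub_mul_log_sub_add_eq_mul_klFun hp.ne' hq.ne']
  exact mul_nonneg hq.le (InformationTheory.klFun_nonneg (div_pos hp hq).le)

lemma mul_log_sub_mul_log_sub_add_eq_zero_iff {p q : ℝ} (hp : 0 < p) (hq : 0 < q) :
    p * log p - p * log q - p + q = 0 ↔ p = q := by
  rw [mul_log_sub_mul_log_sub_add_eq_mul_klFun hp.ne' hq.ne', mul_eq_zero,
    InformationTheory.klFun_eq_zero_iff (div_pos hp hq).le, div_eq_one_iff_eq hq.ne']
  simp [hq.ne']

end Real

section

variable {d : ℕ}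

lemma mlog_eq_cfc {A : Matrix (Fin d) (Fin d) ℝ} (hA : A.IsHermitian) :
    mlog A = cfc Real.log A := by
  rw [hA.cfc_eq_conj_diagonal, mlog, dif_pos hA]
  rfl

lemma isHermitian_mlog (A : Matrix (Fin d) (Fin d) ℝ) : (mlog A).IsHermitian := by
  by_cases hA : A.IsHermitian
  · rw [mlog_eq_cfc hA]
    exact cfc_predicate Real.log A
  · rw [mlog, dif_neg hA]
    exact isHermitian_zero

lemma posDef_mexp {A : Matrix (Fin d) (Fin d) ℝ} (hA : A.IsHermitian) : (mexp A).PosDef :=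
  (nonneg_iff_posSemidef.mp hA.isSelfAdjoint.exp_nonneg).posDef_iff_isUnit.mpr
    (Matrix.isUnit_exp A)

lemma mlog_mexp {A : Matrix (Fin d) (Fin d) ℝ} (hA : A.IsHermitian) : mlog (mexp A) = A := by
  rw [mlog_eq_cfc (posDef_mexp hA).isHermitian]
  exact CFC.log_exp A hA.isSelfAdjoint

lemma qKL_self (P : Matrix (Fin d) (Fin d) ℝ) : qKL P P = 0 := by
  simp [qKL]

lemma qKL_eq_sum {P Q : Matrix (Fin d) (Fin d) ℝ} (hP : P.IsHermitian) (hQ : Q.IsHermitian) :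
    qKL P Q = ∑ i, ∑ j,
      (star (hP.eigenvectorUnitary : Matrix (Fin d) (Fin d) ℝ) * hQ.eigenvectorUnitary) i j ^ 2
        * (hP.eigenvalues i * Real.log (hP.eigenvalues i)
          - hP.eigenvalues i * Real.log (hQ.eigenvalues j) - hP.eigenvalues i
          + hQ.eigenvalues j) := by
  have hPlogP : P * mlog P = cfc (fun x => x * Real.log x) P := by
    rw [mlog_eq_cfc hP, cfc_mul (fun x => x) Real.log P
      (P.finite_real_spectrum.continuousOn _) (P.finite_real_spectrum.continuousOn _),
      cfc_id' ℝ P hP.isSelfAdjoint]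
  have hcfc : ∀ f g : ℝ → ℝ, (cfc f P * cfc g Q).trace = _ := hP.trace_cfc_mul_cfc hQ
  calc qKL P Q
      = (cfc (fun x => x * Real.log x) P * cfc (fun _ : ℝ => (1 : ℝ)) Q).trace
          - (cfc (fun x => x) P * cfc Real.log Q).trace
          - (cfc (fun x => x) P * cfc (fun _ : ℝ => (1 : ℝ)) Q).trace
          + (cfc (fun _ : ℝ => (1 : ℝ)) P * cfc (fun x => x) Q).trace := by
        rw [cfc_const_one ℝ Q, cfc_const_one ℝ P, cfc_id' ℝ P hP.isSelfAdjoint,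
          cfc_id' ℝ Q hQ.isSelfAdjoint, ← mlog_eq_cfc hQ, ← hPlogP, qKL]
        simp only [trace_add, trace_sub, mul_one, one_mul]
    _ = _ := by
        rw [hcfc, hcfc, hcfc, hcfc]
        simp only [← Finset.sum_sub_distrib, ← Finset.sum_add_distrib]
        refine Finset.sum_congr rfl fun i _ => Finset.sum_congr rfl fun j _ => ?_
        ring

lemma qKL_nonneg {P Q : Matrix (Fin d) (Fin d) ℝ} (hP : P.PosDef) (hQ : Q.PosDef) :
    0 ≤ qKL P Q := by
  rw [qKL_eq_sum hP.isHermitian hQ.isHermitian]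
  exact Finset.sum_nonneg fun i _ => Finset.sum_nonneg fun j _ => mul_nonneg (sq_nonneg _)
    (Real.mul_log_sub_mul_log_sub_add_nonneg (hP.eigenvalues_pos i) (hQ.eigenvalues_pos j))

lemma qKL_eq_zero_iff {P Q : Matrix (Fin d) (Fin d) ℝ} (hP : P.PosDef) (hQ : Q.PosDef) :
    qKL P Q = 0 ↔ P = Q := by
  refine ⟨fun hPQ => ?_, fun hPQ => hPQ ▸ qKL_self P⟩
  set p := hP.isHermitian.eigenvalues
  set q := hQ.isHermitian.eigenvalues
  have hterm_nonneg (i j : Fin d) (c : ℝ) :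
      0 ≤ c ^ 2 * (p i * Real.log (p i) - p i * Real.log (q j) - p i + q j) :=
    mul_nonneg (sq_nonneg c)
      (Real.mul_log_sub_mul_log_sub_add_nonneg (hP.eigenvalues_pos i) (hQ.eigenvalues_pos j))
  have hrows := (Finset.sum_eq_zero_iff_of_nonneg fun i _ =>
    Finset.sum_nonneg fun j _ => hterm_nonneg i j _).mp
      ((qKL_eq_sum hP.isHermitian hQ.isHermitian).symm.trans hPQ)
  refine hP.isHermitian.eq_conj_diagonal.trans
    ((conj_diagonal_eq_conj_diagonal (SetLike.coe_mem _) (SetLike.coe_mem _) fun i j hM => ?_).trans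
      hQ.isHermitian.eq_conj_diagonal.symm)
  have hterm := (Finset.sum_eq_zero_iff_of_nonneg fun j _ => hterm_nonneg i j _).mp
    (hrows i (Finset.mem_univ i)) j (Finset.mem_univ j)
  exact (Real.mul_log_sub_mul_log_sub_add_eq_zero_iff (hP.eigenvalues_pos i)
    (hQ.eigenvalues_pos j)).mp ((mul_eq_zero.mp hterm).resolve_left (pow_ne_zero 2 hM))

lemma trace_mul_sub_qKL_eq_of_mlog_eq {u μ Q : Matrix (Fin d) (Fin d) ℝ}
    (hQ : mlog Q = u + mlog μ) (P : Matrix (Fin d) (Fin d) ℝ) :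
    (u * P).trace - qKL P μ = (Q - μ).trace - qKL P Q := by
  rw [qKL, qKL, hQ, mul_add, trace_mul_comm u]
  simp only [trace_add, trace_sub]
  ring

end

theorem qKL_legendre_general {d : ℕ} (μ0 : Matrix (Fin d) (Fin d) ℝ)
    (u : Matrix (Fin d) (Fin d) ℝ) (hu : u.IsHermitian) :
    (mexp (u + mlog μ0)).PosDef ∧
    ((u * mexp (u + mlog μ0)).trace - qKL (mexp (u + mlog μ0)) μ0
      = (mexp (u + mlog μ0) - μ0).trace) ∧
    (∀ P : Matrix (Fin d) (Fin d) ℝ, P.PosDef →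
      (u * P).trace - qKL P μ0 ≤ (mexp (u + mlog μ0) - μ0).trace) ∧
    (∀ P : Matrix (Fin d) (Fin d) ℝ, P.PosDef →
      (u * P).trace - qKL P μ0 = (mexp (u + mlog μ0) - μ0).trace →
        P = mexp (u + mlog μ0)) := by
  have hA : (u + mlog μ0).IsHermitian := hu.add (isHermitian_mlog μ0)
  have hQ : (mexp (u + mlog μ0)).PosDef := posDef_mexp hA
  have hgibbs := trace_mul_sub_qKL_eq_of_mlog_eq (mlog_mexp hA)
  refine ⟨hQ, ?_, fun P hP => ?_, fun P hP hmax => ?_⟩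
  · rw [hgibbs, qKL_self, sub_zero]
  · rw [hgibbs]
    exact sub_le_self _ (qKL_nonneg hP hQ)
  · rw [hgibbs, sub_eq_self] at hmax
    exact (qKL_eq_zero_iff hP hQ).mp hmax

/-- **Legendre transform of the quantum KL divergence in its first argument.**
For `μ0` positive definite and `u` symmetric,
`sup_{P ≻ 0} [tr(u P) - KL(P|μ0)] = tr(exp(u + log μ0) - μ0)`,
attained uniquely at `P = exp(u + log μ0)`. -/
theorem qKL_legendre {d : ℕ} (μ0 : Matrix (Fin d) (Fin d) ℝ) (hμ0 : μ0.PosDef)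
    (u : Matrix (Fin d) (Fin d) ℝ) (hu : u.IsHermitian) :
    (mexp (u + mlog μ0)).PosDef ∧
    ((u * mexp (u + mlog μ0)).trace - qKL (mexp (u + mlog μ0)) μ0
      = (mexp (u + mlog μ0) - μ0).trace) ∧
    (∀ P : Matrix (Fin d) (Fin d) ℝ, P.PosDef →
      (u * P).trace - qKL P μ0 ≤ (mexp (u + mlog μ0) - μ0).trace) ∧
    (∀ P : Matrix (Fin d) (Fin d) ℝ, P.PosDef →
      (u * P).trace - qKL P μ0 = (mexp (u + mlog μ0) - μ0).trace →
        P = mexp (u + mlog μ0)) :=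
  qKL_legendre_general μ0 u hu
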